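/- (Lemma 2) Let B ≥ 1 and let O be a duplicate-free list of products with |O| ≤ B that maximizes f among all duplicate-free lists of length at most B, and assume f(O) > 0. Then for every ρ ∈ [0,1] there exists a nonempty duplicate-free list R with |R| ≤ B such that every position t of R has reachability Θ_t = Π_{j<t} θ_{r_j} ≥ ρ, and the MNL expected revenue of its underlying set ℛ satisfies g(ℛ) ≥ (1 − ρ) f(O). -/

import Mathlib

/-!
Let `τ` be the number of leading positions of `O` whose reachability is at least `ρ`, and let
`G` be the largest MNL revenue of a nonempty prefix of `O` of length at most `τ`; that prefix
is `R`. The revenue `f O` is an average of `g` over the prefixes of `O`, weighted by the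
probability that browsing stops there. Prefixes of length at most `τ` contribute at most `G`;
by subadditivity of `g`, every longer prefix earns at most `G` plus the revenue of its part
inside the suffix `O.drop τ`. Hence `f O ≤ G + Θ_τ · f (O.drop τ)`. By optimality of `O`,
`f (O.drop τ) ≤ f O`, and `Θ_τ < ρ` unless `τ = |O|` (when the suffix is empty), so
`f O ≤ G + ρ · f O`.
-/

/-- MNL expected revenue of a finite set `S` of products, where product `i`
has revenue `α i` and preference weight `β i`. -/
noncomputable def g (α β : ℕ → ℝ) (S : Finset ℕ) : ℝ :=
  (∑ i ∈ S, α i * β i) / ((∑ i ∈ S, β i) + 1)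

/-- Reachability of (0-based) position `t` of the sequence `S` under the
cascade browse model: the product of the continuation probabilities of all
earlier products. -/
noncomputable def reach (θ : ℕ → ℝ) (S : List ℕ) (t : ℕ) : ℝ :=
  ∏ j ∈ Finset.range t, θ (S.getD j 0)

/-- Expected revenue of a sequence of products `S` under the cascade browse
model combined with the MNL choice model. -/
noncomputable def f (α β θ : ℕ → ℝ) (S : List ℕ) : ℝ :=
  (∑ t ∈ Finset.range (S.length - 1),
      reach θ S t * (1 - θ (S.getD t 0)) * g α β (S.take (t + 1)).toFinset)
    + reach θ S (S.length - 1) * g α β S.toFinset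

open Finset

section Revenue

variable {α β : ℕ → ℝ}

lemma g_empty (α β : ℕ → ℝ) : g α β ∅ = 0 := by
  simp [g]

lemma g_nonneg (hα : ∀ i, 0 ≤ α i) (hβ : ∀ i, 0 ≤ β i) (S : Finset ℕ) : 0 ≤ g α β S :=
  div_nonneg (sum_nonneg fun i _ => mul_nonneg (hα i) (hβ i))
    (add_nonneg (sum_nonneg fun i _ => hβ i) zero_le_one)

-- Merging two assortments at most adds the numerators and only enlarges the denominator.
lemma g_union_le (hα : ∀ i, 0 ≤ α i) (hβ : ∀ i, 0 ≤ β i) (A B : Finset ℕ) :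
    g α β (A ∪ B) ≤ g α β A + g α β B := by
  have hrev : ∑ i ∈ A ∪ B, α i * β i ≤ ∑ i ∈ A, α i * β i + ∑ i ∈ B, α i * β i := by
    rw [← sum_union_inter]
    exact le_add_of_nonneg_right (sum_nonneg fun i _ => mul_nonneg (hα i) (hβ i))
  have hwA : ∑ i ∈ A, β i ≤ ∑ i ∈ A ∪ B, β i :=
    sum_le_sum_of_subset_of_nonneg subset_union_left fun i _ _ => hβ i
  have hwB : ∑ i ∈ B, β i ≤ ∑ i ∈ A ∪ B, β i :=
    sum_le_sum_of_subset_of_nonneg subset_union_right fun i _ _ => hβ i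
  have hA := sum_nonneg fun i (_ : i ∈ A) => hβ i
  have hB := sum_nonneg fun i (_ : i ∈ B) => hβ i
  have hrA := sum_nonneg fun i (_ : i ∈ A) => mul_nonneg (hα i) (hβ i)
  have hrB := sum_nonneg fun i (_ : i ∈ B) => mul_nonneg (hα i) (hβ i)
  unfold g
  calc (∑ i ∈ A ∪ B, α i * β i) / (∑ i ∈ A ∪ B, β i + 1)
      ≤ (∑ i ∈ A, α i * β i + ∑ i ∈ B, α i * β i) / (∑ i ∈ A ∪ B, β i + 1) := by
        gcongr; linarith
    _ = (∑ i ∈ A, α i * β i) / (∑ i ∈ A ∪ B, β i + 1)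
          + (∑ i ∈ B, α i * β i) / (∑ i ∈ A ∪ B, β i + 1) := add_div _ _ _
    _ ≤ (∑ i ∈ A, α i * β i) / (∑ i ∈ A, β i + 1)
          + (∑ i ∈ B, α i * β i) / (∑ i ∈ B, β i + 1) := by
        gcongr

lemma g_take_add_le (hα : ∀ i, 0 ≤ α i) (hβ : ∀ i, 0 ≤ β i) (S : List ℕ) (n m : ℕ) :
    g α β (S.take (n + m)).toFinset
      ≤ g α β (S.take n).toFinset + g α β ((S.drop n).take m).toFinset := by
  rw [List.take_add, List.toFinset_append]
  exact g_union_le hα hβ _ _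

end Revenue

section Reachability

variable {θ : ℕ → ℝ}

lemma reach_zero (θ : ℕ → ℝ) (S : List ℕ) : reach θ S 0 = 1 :=
  prod_range_zero _

lemma reach_succ (θ : ℕ → ℝ) (S : List ℕ) (t : ℕ) :
    reach θ S (t + 1) = reach θ S t * θ (S.getD t 0) :=
  prod_range_succ _ _

lemma reach_nonneg (hθ : ∀ i, 0 ≤ θ i) (S : List ℕ) (t : ℕ) : 0 ≤ reach θ S t :=
  prod_nonneg fun _ _ => hθ _

lemma reach_antitone (hθ : ∀ i, 0 ≤ θ i ∧ θ i ≤ 1) (S : List ℕ) : Antitone (reach θ S) :=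
  antitone_nat_of_succ_le fun t => by
    rw [reach_succ]
    exact mul_le_of_le_one_right (reach_nonneg (fun i => (hθ i).1) S t) (hθ _).2

lemma reach_take (θ : ℕ → ℝ) (S : List ℕ) {t m : ℕ} (h : t ≤ m) :
    reach θ (S.take m) t = reach θ S t :=
  prod_congr rfl fun j hj => by
    rw [List.getD_eq_getElem?_getD, List.getD_eq_getElem?_getD,
      List.getElem?_take_of_lt (lt_of_lt_of_le (mem_range.mp hj) h)]

lemma getD_drop (S : List ℕ) (n j : ℕ) : (S.drop n).getD j 0 = S.getD (n + j) 0 := by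
  rw [List.getD_eq_getElem?_getD, List.getD_eq_getElem?_getD, List.getElem?_drop]

lemma reach_add (θ : ℕ → ℝ) (S : List ℕ) (n s : ℕ) :
    reach θ S (n + s) = reach θ S n * reach θ (S.drop n) s := by
  simp only [reach, prod_range_add, getD_drop]

end Reachability

section StopProbability

variable {θ : ℕ → ℝ}

/-- The probability that browsing `S` ends at position `t`: the customer reaches `t` and then
either stops there or runs out of products. It turns `f` into an average of `g` over prefixes. -/
noncomputable def stopProb (θ : ℕ → ℝ) (S : List ℕ) (t : ℕ) : ℝ :=
  if t + 1 < S.length then reach θ S t * (1 - θ (S.getD t 0)) else reach θ S t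

lemma stopProb_nonneg (hθ : ∀ i, 0 ≤ θ i ∧ θ i ≤ 1) (S : List ℕ) (t : ℕ) :
    0 ≤ stopProb θ S t := by
  have hr := reach_nonneg (fun i => (hθ i).1) S t
  unfold stopProb
  split_ifs
  · exact mul_nonneg hr (sub_nonneg.mpr (hθ _).2)
  · exact hr

lemma stopProb_add (θ : ℕ → ℝ) (S : List ℕ) (n s : ℕ) :
    stopProb θ S (n + s) = reach θ S n * stopProb θ (S.drop n) s := by
  simp only [stopProb, reach_add, getD_drop, List.length_drop,
    show n + s + 1 < S.length ↔ s + 1 < S.length - n by omega]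
  split_ifs <;> ring

lemma sum_range_stopProb_of_length_eq_succ (θ : ℕ → ℝ) (u : ℕ → ℝ) {S : List ℕ} {m : ℕ}
    (hS : S.length = m + 1) :
    ∑ t ∈ range (m + 1), stopProb θ S t * u t
      = ∑ t ∈ range m, reach θ S t * (1 - θ (S.getD t 0)) * u t + reach θ S m * u m := by
  rw [sum_range_succ]
  congr 1
  · exact sum_congr rfl fun t ht => by
      rw [stopProb, if_pos (by rw [hS]; exact Nat.succ_lt_succ (mem_range.mp ht))]
  · rw [stopProb, if_neg (by omega)]

lemma sum_stopProb_le_one (θ : ℕ → ℝ) (S : List ℕ) :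
    ∑ t ∈ range S.length, stopProb θ S t ≤ 1 := by
  rcases hS : S.length with _ | m
  · simp
  have htele : ∑ t ∈ range m, reach θ S t * (1 - θ (S.getD t 0)) = 1 - reach θ S m := by
    calc ∑ t ∈ range m, reach θ S t * (1 - θ (S.getD t 0))
        = ∑ t ∈ range m, (reach θ S t - reach θ S (t + 1)) :=
          sum_congr rfl fun t _ => by rw [reach_succ]; ring
      _ = 1 - reach θ S m := by rw [sum_range_sub', reach_zero]
  have := sum_range_stopProb_of_length_eq_succ θ (fun _ => 1) hS
  simp only [mul_one] at this
  rw [this, htele]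
  simp

lemma f_eq_sum_stopProb (α β θ : ℕ → ℝ) (S : List ℕ) :
    f α β θ S = ∑ t ∈ range S.length, stopProb θ S t * g α β (S.take (t + 1)).toFinset := by
  rcases hS : S.length with _ | m
  · simp [List.length_eq_zero_iff.mp hS, f, g]
  rw [sum_range_stopProb_of_length_eq_succ θ _ hS, f, hS, Nat.add_sub_cancel,
    ← hS, List.take_length]

end StopProbability

lemma f_nil (α β θ : ℕ → ℝ) : f α β θ [] = 0 := by
  simp [f, g]

lemma f_le_add_reach_mul_f_drop {α β θ : ℕ → ℝ} (hα : ∀ i, 0 ≤ α i) (hβ : ∀ i, 0 ≤ β i)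
    (hθ : ∀ i, 0 ≤ θ i ∧ θ i ≤ 1) {S : List ℕ} {n : ℕ} (hn : n ≤ S.length) {G : ℝ}
    (hG : ∀ m ≤ n, g α β (S.take m).toFinset ≤ G) :
    f α β θ S ≤ G + reach θ S n * f α β θ (S.drop n) := by
  obtain ⟨d, hd⟩ : ∃ d, S.length = n + d := ⟨S.length - n, by omega⟩
  have hdrop : (S.drop n).length = d := by rw [List.length_drop]; omega
  have hG0 : 0 ≤ G := (g_nonneg hα hβ _).trans (hG 0 n.zero_le)
  have hhead : ∀ t ∈ range n, stopProb θ S t * g α β (S.take (t + 1)).toFinset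
      ≤ stopProb θ S t * G := fun t ht =>
    mul_le_mul_of_nonneg_left (hG _ (mem_range.mp ht)) (stopProb_nonneg hθ S t)
  have htail : ∀ s ∈ range d, stopProb θ S (n + s) * g α β (S.take (n + s + 1)).toFinset
      ≤ stopProb θ S (n + s) * G
        + reach θ S n * (stopProb θ (S.drop n) s * g α β ((S.drop n).take (s + 1)).toFinset) := by
    intro s _
    calc stopProb θ S (n + s) * g α β (S.take (n + (s + 1))).toFinset
        ≤ stopProb θ S (n + s) * (G + g α β ((S.drop n).take (s + 1)).toFinset) :=
          mul_le_mul_of_nonneg_left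
            ((g_take_add_le hα hβ S n (s + 1)).trans (add_le_add_left (hG n le_rfl) _))
            (stopProb_nonneg hθ S _)
      _ = _ := by rw [mul_add, stopProb_add θ S n s]; ring
  calc f α β θ S
      = ∑ t ∈ range n, stopProb θ S t * g α β (S.take (t + 1)).toFinset
        + ∑ s ∈ range d, stopProb θ S (n + s) * g α β (S.take (n + s + 1)).toFinset := by
        rw [f_eq_sum_stopProb, hd, sum_range_add]
    _ ≤ ∑ t ∈ range n, stopProb θ S t * G
        + ∑ s ∈ range d, (stopProb θ S (n + s) * G + reach θ S n *
            (stopProb θ (S.drop n) s * g α β ((S.drop n).take (s + 1)).toFinset)) :=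
        add_le_add (sum_le_sum hhead) (sum_le_sum htail)
    _ = (∑ t ∈ range S.length, stopProb θ S t) * G + reach θ S n * f α β θ (S.drop n) := by
        rw [sum_add_distrib, ← mul_sum, f_eq_sum_stopProb α β θ (S.drop n), hdrop, hd,
          sum_range_add, add_mul, sum_mul, sum_mul, add_assoc]
    _ ≤ G + reach θ S n * f α β θ (S.drop n) := by
        gcongr
        exact mul_le_of_le_one_left hG0 (sum_stopProb_le_one θ S)

lemma exists_maximal_reachable_length {θ : ℕ → ℝ} (hθ : ∀ i, 0 ≤ θ i ∧ θ i ≤ 1) {S : List ℕ}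
    (hS : S ≠ []) {ρ : ℝ} (hρ : ρ ≤ 1) :
    ∃ τ, 1 ≤ τ ∧ τ ≤ S.length ∧ (∀ t < τ, ρ ≤ reach θ S t) ∧
      (τ < S.length → reach θ S τ < ρ) := by
  have hP1 : ∀ t < 1, ρ ≤ reach θ S t := fun t ht => by
    rwa [Nat.lt_one_iff.mp ht, reach_zero]
  have hS1 : 1 ≤ S.length := List.length_pos_iff.mpr hS
  refine ⟨Nat.findGreatest (fun c => ∀ t < c, ρ ≤ reach θ S t) S.length,
    Nat.le_findGreatest hS1 hP1, Nat.findGreatest_le _,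
    Nat.findGreatest_spec (P := fun c => ∀ t < c, ρ ≤ reach θ S t) hS1 hP1, fun hτ => ?_⟩
  obtain ⟨t, ht, hlt⟩ := by simpa using Nat.findGreatest_is_greatest (Nat.lt_succ_self _) hτ
  exact (reach_antitone hθ S ht).trans_lt hlt

lemma exists_take_isMax_g {α β : ℕ → ℝ} (hα : ∀ i, 0 ≤ α i) (hβ : ∀ i, 0 ≤ β i) (S : List ℕ)
    {τ : ℕ} (hτ : 1 ≤ τ) :
    ∃ m, 1 ≤ m ∧ m ≤ τ ∧ ∀ k ≤ τ, g α β (S.take k).toFinset ≤ g α β (S.take m).toFinset := by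
  obtain ⟨m, hm, hm_max⟩ := (Icc 1 τ).exists_max_image (fun k => g α β (S.take k).toFinset)
    ⟨1, mem_Icc.mpr ⟨le_rfl, hτ⟩⟩
  refine ⟨m, (mem_Icc.mp hm).1, (mem_Icc.mp hm).2, fun k hk => ?_⟩
  rcases k.eq_zero_or_pos with rfl | hk0
  · simpa [g_empty] using g_nonneg hα hβ _
  · exact hm_max k (mem_Icc.mpr ⟨hk0, hk⟩)

theorem stmt6_general (α β θ : ℕ → ℝ) (hα : ∀ i, 0 ≤ α i) (hβ : ∀ i, 0 ≤ β i)
    (hθ : ∀ i, 0 ≤ θ i ∧ θ i ≤ 1)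
    (B : ℕ)
    (O : List ℕ) (hO : O.Nodup) (hOB : O.length ≤ B)
    (hopt : ∀ L : List ℕ, L.Nodup → L.length ≤ B → f α β θ L ≤ f α β θ O)
    (hfO : 0 < f α β θ O)
    (ρ : ℝ) (hρ0 : 0 ≤ ρ) (hρ1 : ρ ≤ 1) :
    ∃ R : List ℕ, R ≠ [] ∧ R.Nodup ∧ R.length ≤ B ∧
      (∀ t < R.length, ρ ≤ reach θ R t) ∧
      (1 - ρ) * f α β θ O ≤ g α β R.toFinset := by
  have hO_ne : O ≠ [] := by
    rintro rfl
    exact hfO.ne' (f_nil α β θ)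
  obtain ⟨τ, hτ1, hτO, hτ_reach, hτ_exit⟩ := exists_maximal_reachable_length hθ hO_ne hρ1
  obtain ⟨m, hm1, hmτ, hm_max⟩ := exists_take_isMax_g hα hβ O hτ1
  have hrest : reach θ O τ * f α β θ (O.drop τ) ≤ ρ * f α β θ O := by
    rcases hτO.eq_or_lt with hτ | hτ
    · rw [hτ, List.drop_length, f_nil, mul_zero]
      exact mul_nonneg hρ0 hfO.le
    calc reach θ O τ * f α β θ (O.drop τ) ≤ reach θ O τ * f α β θ O :=
          mul_le_mul_of_nonneg_left (hopt _ (hO.sublist (List.drop_sublist _ _))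
            ((List.length_drop ..).trans_le (by omega))) (reach_nonneg (fun i => (hθ i).1) O τ)
      _ ≤ ρ * f α β θ O := mul_le_mul_of_nonneg_right (hτ_exit hτ).le hfO.le
  have hf := f_le_add_reach_mul_f_drop hα hβ hθ hτO hm_max
  refine ⟨O.take m, List.ne_nil_of_length_pos (by rw [List.length_take]; omega),
    hO.sublist (List.take_sublist _ _), by rw [List.length_take]; omega, fun t ht => ?_,
    by linarith⟩
  rw [List.length_take] at ht
  rw [reach_take θ O (by omega : t ≤ m)]
  exact hτ_reach t (by omega)

/-- Lemma 2: there is a nonempty duplicate-free sequence `R`, all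
of whose positions have reachability at least `ρ`, whose underlying set has MNL
revenue at least `(1 - ρ) f(O)`. -/
theorem stmt6 (α β θ : ℕ → ℝ) (hα : ∀ i, 0 ≤ α i) (hβ : ∀ i, 0 ≤ β i)
    (hθ : ∀ i, 0 ≤ θ i ∧ θ i ≤ 1)
    (B : ℕ) (hB : 1 ≤ B)
    (O : List ℕ) (hO : O.Nodup) (hOB : O.length ≤ B)
    (hopt : ∀ L : List ℕ, L.Nodup → L.length ≤ B → f α β θ L ≤ f α β θ O)
    (hfO : 0 < f α β θ O)
    (ρ : ℝ) (hρ0 : 0 ≤ ρ) (hρ1 : ρ ≤ 1) :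
    ∃ R : List ℕ, R ≠ [] ∧ R.Nodup ∧ R.length ≤ B ∧
      (∀ t < R.length, ρ ≤ reach θ R t) ∧
      (1 - ρ) * f α β θ O ≤ g α β R.toFinset :=
  stmt6_general α β θ hα hβ hθ B O hO hOB hopt hfO ρ hρ0 hρ1
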